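/- Let R be an ℕ-graded ring whose degree-zero part R₀ is a field, with homogeneous maximal ideal 𝔪. Let M and N be graded R-modules, with M and N finitely generated and N torsion-free. If there exists a morphism φ : M_𝔪 → N_𝔪 of R_𝔪-modules, then there exists a morphism φ̃ : M → N of R-modules (a finite sum of graded homogeneous morphisms) such that φ̃ ⊗_R R_𝔪 agrees with φ up to multiplication by a unit of R_𝔪. -/

import Mathlib

/-!
As `N` is torsion-free, `N → N_𝔪` is injective, so clearing the finitely many denominators
of `φ` on generators of `M` shows that `s • φ`, for some `s ∉ 𝔪`, is the localization of an
`R`-linear map `h : M → N`.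
Any linear map `h` out of a finitely generated graded module is the finite sum of its
homogeneous components `h_i`, where `h_i` sends `x ∈ M_j` to the degree-`(j + i)` part of
`h x`: only finitely many shifts `i` occur on the homogeneous parts of a generating set.
-/

open DirectSum Filter

section Graded

variable {ι R M N : Type*} [AddCommGroup ι] [DecidableEq ι] [Ring R]
  [AddCommGroup M] [Module R M] [AddCommGroup N] [Module R N]
  (𝒜 : ι → AddSubgroup R) (ℳ : ι → AddSubgroup M) (𝒩 : ι → AddSubgroup N)
  [Decomposition ℳ] [Decomposition 𝒩]

theorem DirectSum.coe_decompose_smul_of_mem [SetLike.GradedSMul 𝒜 𝒩] {d : ι} {r : R}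
    (hr : r ∈ 𝒜 d) (y : N) (n : ι) :
    (decompose 𝒩 (r • y) n : N) = r • (decompose 𝒩 y (n - d) : N) := by
  induction y using Decomposition.inductionOn 𝒩 with
  | zero => simp
  | @homogeneous k y =>
    have hry : r • (y : N) ∈ 𝒩 (d + k) := SetLike.GradedSMul.smul_mem hr y.2
    by_cases hn : n = d + k
    · subst hn
      rw [decompose_of_mem_same 𝒩 hry, add_sub_cancel_left, decompose_of_mem_same 𝒩 y.2]
    · rw [decompose_of_mem_ne 𝒩 hry (Ne.symm hn),
        decompose_of_mem_ne 𝒩 y.2 (by rintro rfl; simp at hn), smul_zero]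
  | add y y' hy hy' => simp only [smul_add, decompose_add, add_apply, AddSubgroup.coe_add, hy, hy']

theorem DirectSum.eventually_sum_decompose_add_eq (y : N) (j : ι) :
    ∀ᶠ s in atTop, ∑ i ∈ s, (decompose 𝒩 y (j + i) : N) = y := by
  classical
  refine eventually_atTop.2 ⟨(decompose 𝒩 y).support.image (-j + ·), fun s hs => ?_⟩
  have hsupp : (decompose 𝒩 y).support ⊆ s.map (addLeftEmbedding j) := fun n hn =>
    Finset.mem_map.2 ⟨-j + n, hs (Finset.mem_image_of_mem _ hn), add_neg_cancel_left j n⟩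
  calc ∑ i ∈ s, (decompose 𝒩 y (j + i) : N)
      = ∑ n ∈ s.map (addLeftEmbedding j), (decompose 𝒩 y n : N) :=
        (Finset.sum_map s (addLeftEmbedding j) fun n => (decompose 𝒩 y n : N)).symm
    _ = ∑ n ∈ (decompose 𝒩 y).support, (decompose 𝒩 y n : N) :=
      (Finset.sum_subset hsupp fun n _ hn => by simp [DFinsupp.notMem_support_iff.1 hn]).symm
    _ = y := sum_support_decompose 𝒩 y

/-- The part of `f` raising degrees by `i`: on `ℳ j` it is `f` followed by the projection
to `𝒩 (j + i)`. -/
noncomputable def AddMonoidHom.gradedComponent (f : M →+ N) (i : ι) : M →+ N :=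
  (toAddMonoid fun j => (𝒩 (j + i)).subtype.comp
      ((DFinsupp.evalAddMonoidHom (j + i)).comp
        ((decomposeAddEquiv 𝒩).toAddMonoidHom.comp (f.comp (ℳ j).subtype)))).comp
    (decomposeAddEquiv ℳ).toAddMonoidHom

theorem AddMonoidHom.gradedComponent_apply_of_mem (f : M →+ N) (i : ι) {j : ι} {x : M}
    (hx : x ∈ ℳ j) : f.gradedComponent ℳ 𝒩 i x = (decompose 𝒩 (f x) (j + i) : N) := by
  show toAddMonoid _ (decompose ℳ x) = _
  rw [decompose_of_mem ℳ hx, toAddMonoid_of]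
  rfl

namespace LinearMap

variable [SetLike.GradedSMul 𝒜 ℳ] [SetLike.GradedSMul 𝒜 𝒩]

theorem gradedComponent_smul_of_mem (f : M →ₗ[R] N) (i : ι) {d : ι} {r : R} (hr : r ∈ 𝒜 d)
    (x : M) : f.toAddMonoidHom.gradedComponent ℳ 𝒩 i (r • x) =
      r • f.toAddMonoidHom.gradedComponent ℳ 𝒩 i x := by
  induction x using Decomposition.inductionOn ℳ with
  | zero => simp
  | @homogeneous k x =>
    rw [AddMonoidHom.gradedComponent_apply_of_mem ℳ 𝒩 _ i (SetLike.GradedSMul.smul_mem hr x.2),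
      AddMonoidHom.gradedComponent_apply_of_mem ℳ 𝒩 _ i x.2, toAddMonoidHom_coe, map_smul,
      coe_decompose_smul_of_mem 𝒜 𝒩 hr, vadd_eq_add, add_assoc, add_sub_cancel_left]
  | add x x' hx hx' => rw [smul_add, map_add, map_add, hx, hx', smul_add]

variable [GradedRing 𝒜]

noncomputable def gradedComponent (f : M →ₗ[R] N) (i : ι) : M →ₗ[R] N where
  __ := f.toAddMonoidHom.gradedComponent ℳ 𝒩 i
  map_smul' r x := by
    change f.toAddMonoidHom.gradedComponent ℳ 𝒩 i (r • x) =
      r • f.toAddMonoidHom.gradedComponent ℳ 𝒩 i x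
    induction r using Decomposition.inductionOn 𝒜 with
    | zero => simp
    | homogeneous r => exact gradedComponent_smul_of_mem 𝒜 ℳ 𝒩 f i r.2 x
    | add r r' hr hr' => rw [add_smul, map_add, hr, hr', add_smul]

theorem gradedComponent_apply_of_mem (f : M →ₗ[R] N) (i : ι) {j : ι} {x : M} (hx : x ∈ ℳ j) :
    f.gradedComponent 𝒜 ℳ 𝒩 i x = (decompose 𝒩 (f x) (j + i) : N) :=
  f.toAddMonoidHom.gradedComponent_apply_of_mem ℳ 𝒩 i hx

theorem gradedComponent_mem (f : M →ₗ[R] N) (i : ι) {j : ι} {x : M} (hx : x ∈ ℳ j) :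
    f.gradedComponent 𝒜 ℳ 𝒩 i x ∈ 𝒩 (j + i) := by
  rw [gradedComponent_apply_of_mem 𝒜 ℳ 𝒩 f i hx]
  exact SetLike.coe_mem _

theorem eventually_sum_gradedComponent_apply (f : M →ₗ[R] N) (x : M) :
    ∀ᶠ s in atTop, ∑ i ∈ s, f.gradedComponent 𝒜 ℳ 𝒩 i x = f x := by
  induction x using Decomposition.inductionOn ℳ with
  | zero => exact Eventually.of_forall fun s => by simp
  | @homogeneous j x =>
    simpa only [gradedComponent_apply_of_mem 𝒜 ℳ 𝒩 f _ x.2] using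
      eventually_sum_decompose_add_eq 𝒩 (f x) j
  | add x x' hx hx' =>
    filter_upwards [hx, hx'] with s hs hs'
    simp only [map_add, Finset.sum_add_distrib, hs, hs']

theorem exists_sum_gradedComponent_eq [Module.Finite R M] (f : M →ₗ[R] N) :
    ∃ s : Finset ι, ∑ i ∈ s, f.gradedComponent 𝒜 ℳ 𝒩 i = f := by
  obtain ⟨T, hT⟩ := Module.Finite.fg_top (R := R) (M := M)
  obtain ⟨s, hs⟩ := ((eventually_all_finset T).2 fun x _ =>
    eventually_sum_gradedComponent_apply 𝒜 ℳ 𝒩 f x).exists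
  exact ⟨s, ext_on hT fun x hx => by rw [sum_apply]; exact hs x hx⟩

end LinearMap

end Graded

section Localization

variable {R M N N' : Type*} [CommRing R] (S : Submonoid R)
  [AddCommGroup M] [Module R M] [AddCommGroup N] [Module R N] [AddCommGroup N'] [Module R N']

theorem Module.Finite.exists_lift_of_isLocalizedModule_of_injective [Module.Finite R M]
    (f : N →ₗ[R] N') [IsLocalizedModule S f] (hf : Function.Injective f) (g : M →ₗ[R] N') :
    ∃ (h : M →ₗ[R] N) (s : S), f ∘ₗ h = s • g := by
  obtain ⟨T, hT⟩ := Module.Finite.fg_top (R := R) (M := M)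
  obtain ⟨s, hs⟩ := IsLocalizedModule.exist_integer_multiples S f T g
  have hrange : ∀ x, (s • g) x ∈ LinearMap.range f := by
    have : (⊤ : Submodule R M) ≤ (LinearMap.range f).comap (s • g) := by
      rw [← hT, Submodule.span_le]
      exact hs
    exact fun x => this Submodule.mem_top
  refine ⟨(LinearEquiv.ofInjective f hf).symm ∘ₗ (s • g).codRestrict _ hrange, s, ?_⟩
  ext x
  simp

theorem LocalizedModule.exists_map_eq_smul [Module.Finite R M]
    (hN : ∀ s : S, IsSMulRegular N (s : R))
    (φ : LocalizedModule S M →ₗ[Localization S] LocalizedModule S N) :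
    ∃ (h : M →ₗ[R] N) (s : S), map S h = algebraMap R (Localization S) s • φ := by
  have hinj : Function.Injective (mkLinearMap S N) :=
    (IsLocalizedModule.injective_iff_isRegular S (mkLinearMap S N)).2 hN
  obtain ⟨h, s, hs⟩ := Module.Finite.exists_lift_of_isLocalizedModule_of_injective S
    (mkLinearMap S N) hinj (φ.restrictScalars R ∘ₗ mkLinearMap S M)
  refine ⟨h, s, LinearMap.restrictScalars_injective R ?_⟩
  refine IsLocalizedModule.linearMap_ext S (mkLinearMap S M) (mkLinearMap S N) ?_
  ext x
  simpa [algebraMap_smul, Submonoid.smul_def] using LinearMap.congr_fun hs x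

end Localization

theorem stmt_0_general {R M N : Type} [CommRing R] [AddCommGroup M] [Module R M]
    [AddCommGroup N] [Module R N]
    (𝒜 : ℤ → AddSubgroup R) [GradedRing 𝒜]
    (𝔪 : Ideal R)
    (S : Submonoid R) (hS : ∀ x : R, x ∈ S ↔ x ∉ 𝔪)
    (ℳ : ℤ → AddSubgroup M) (𝒩 : ℤ → AddSubgroup N)
    [DirectSum.Decomposition ℳ] [DirectSum.Decomposition 𝒩]
    [SetLike.GradedSMul 𝒜 ℳ] [SetLike.GradedSMul 𝒜 𝒩]
    (hMfin : Module.Finite R M)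
    (hNtf : ∀ (r : R) (n : N), r • n = 0 → r = 0 ∨ n = 0)
    (φ : LocalizedModule S M →ₗ[Localization S] LocalizedModule S N) :
    ∃ (s : Finset ℤ) (ψ : ℤ → (M →ₗ[R] N)) (u : (Localization S)ˣ),
      (∀ i ∈ s, ∀ (m : ℤ), ∀ x ∈ ℳ m, ψ i x ∈ 𝒩 (m + i)) ∧
      ∀ y : LocalizedModule S M,
        LocalizedModule.map S (∑ i ∈ s, ψ i) y = (u : Localization S) • φ y := by
  have hreg : ∀ s : S, IsSMulRegular N (s : R) := fun s =>
    IsSMulRegular.of_right_eq_zero_of_smul fun n hn =>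
      (hNtf s n hn).resolve_left fun hs0 => (hS s).1 s.2 (hs0 ▸ 𝔪.zero_mem)
  obtain ⟨h, s₀, hh⟩ := LocalizedModule.exists_map_eq_smul S hreg φ
  obtain ⟨s, hs⟩ := h.exists_sum_gradedComponent_eq 𝒜 ℳ 𝒩
  refine ⟨s, h.gradedComponent 𝒜 ℳ 𝒩, (IsLocalization.map_units (Localization S) s₀).unit,
    fun i _ m x hx => h.gradedComponent_mem 𝒜 ℳ 𝒩 i hx, fun y => ?_⟩
  rw [hs, hh, LinearMap.smul_apply, IsUnit.unit_spec]

/-- Let `R` be an ℕ-graded ring (graded by `𝒜 : ℤ → AddSubgroup R`,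
vanishing in negative degrees) with `𝒜 0` a field, and let `𝔪` be the homogeneous
maximal ideal (elements with vanishing degree-zero component), with `S` the
complementary multiplicative set. Let `M`, `N` be finitely generated graded
`R`-modules with `N` torsion-free. Any `R_𝔪`-linear map `φ : M_𝔪 → N_𝔪` is, up to a
unit of `R_𝔪`, the localization of an `R`-linear map `M → N` which is a finite sum
of homogeneous maps. -/
theorem stmt_0 {R M N : Type} [CommRing R] [AddCommGroup M] [Module R M]
    [AddCommGroup N] [Module R N]
    (𝒜 : ℤ → AddSubgroup R) [GradedRing 𝒜]
    (hNNeg : ∀ i : ℤ, i < 0 → 𝒜 i = ⊥)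
    (hfield : ∀ x ∈ 𝒜 0, x ≠ 0 → ∃ y ∈ 𝒜 0, x * y = 1)
    (𝔪 : Ideal R) (h𝔪 : ∀ x : R, x ∈ 𝔪 ↔ (DirectSum.decompose 𝒜 x 0 : R) = 0)
    (S : Submonoid R) (hS : ∀ x : R, x ∈ S ↔ x ∉ 𝔪)
    (ℳ : ℤ → AddSubgroup M) (𝒩 : ℤ → AddSubgroup N)
    [DirectSum.Decomposition ℳ] [DirectSum.Decomposition 𝒩]
    [SetLike.GradedSMul 𝒜 ℳ] [SetLike.GradedSMul 𝒜 𝒩]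
    (hMfin : Module.Finite R M) (hNfin : Module.Finite R N)
    (hNtf : ∀ (r : R) (n : N), r • n = 0 → r = 0 ∨ n = 0)
    (φ : LocalizedModule S M →ₗ[Localization S] LocalizedModule S N) :
    ∃ (s : Finset ℤ) (ψ : ℤ → (M →ₗ[R] N)) (u : (Localization S)ˣ),
      (∀ i ∈ s, ∀ (m : ℤ), ∀ x ∈ ℳ m, ψ i x ∈ 𝒩 (m + i)) ∧
      ∀ y : LocalizedModule S M,
        LocalizedModule.map S (∑ i ∈ s, ψ i) y = (u : Localization S) • φ y :=
  stmt_0_general 𝒜 𝔪 S hS ℳ 𝒩 hMfin hNtf φ
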